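/- Lemma (every n-simplex is the death simplex of exactly one pair; well-definedness of τ_{r,ω₀}). Let r be an order with levels on X. Then for every n-simplex ω₀ ∈ X^(n) there exists exactly one (n−1)-simplex τ₀ ∈ X^(n−1) such that (τ₀, ω₀) is a persistence pair of r. -/

import Mathlib

open scoped Classical

namespace StableVol

/-- A finite abstract simplicial complex of dimension `n`: a finite family of nonempty
finite subsets of the vertex set, closed under nonempty subsets, in which every element
is contained in an element of cardinality `n+1`. -/
structure NComplex (V : Type*) [DecidableEq V] (n : ℕ) where
  X : Finset (Finset V)
  nonempty_mem : ∀ σ ∈ X, σ.Nonempty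
  down_closed : ∀ σ ∈ X, ∀ σ' : Finset V, σ' ⊆ σ → σ'.Nonempty → σ' ∈ X
  contained_top : ∀ σ ∈ X, ∃ ω ∈ X, σ ⊆ ω ∧ ω.card = n + 1

variable {V : Type*} [DecidableEq V] {n : ℕ}

/-- An `n`-cell is either an `n`-simplex (`some ω`) or the formal cell `ω∞` (`none`). -/
abbrev Cell (V : Type*) := Option (Finset V)

/-- `τ` is a face of the cell `c`.  For `c = some ω` this means that `ω` is an
`n`-simplex of `X` containing `τ`; the faces of `ω∞ = none` are the `(n-1)`-simplices
having exactly one `n`-simplex coface. -/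
def faceCell (C : NComplex V n) (τ : Finset V) : Cell V → Prop
  | some ω => ω ∈ C.X ∧ ω.card = n + 1 ∧ τ ⊆ ω
  | none => {ω | ω ∈ C.X ∧ ω.card = n + 1 ∧ τ ⊆ ω}.ncard = 1

def IsCell (C : NComplex V n) : Cell V → Prop
  | some ω => ω ∈ C.X ∧ ω.card = n + 1
  | none => True

/-- Adjacency in the dual graph, restricted to the edge set `E ⊆ X^(n-1)`. -/
def adj (C : NComplex V n) (E : Set (Finset V)) (c c' : Cell V) : Prop :=
  ∃ τ ∈ E, faceCell C τ c ∧ faceCell C τ c' ∧ c ≠ c'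

/-- `KV C E c₀`: the set of `n`-cells in the connected component of `c₀` in the
subgraph of the dual graph with edge set `E`. -/
def KV (C : NComplex V n) (E : Set (Finset V)) (c₀ : Cell V) : Set (Cell V) :=
  {c | Relation.ReflTransGen (adj C E) c₀ c}

/-- Every `(n-1)`-simplex of `X` is a face of exactly two `n`-cells. -/
def TwoCofaces (C : NComplex V n) : Prop :=
  ∀ τ ∈ C.X, τ.card = n →
    ∃ c₁ c₂ : Cell V, c₁ ≠ c₂ ∧ ∀ c : Cell V, faceCell C τ c ↔ (c = c₁ ∨ c = c₂)

/-- The dual graph (with full edge set `X^(n-1)`) is connected. -/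
def DualConn (C : NComplex V n) : Prop :=
  ∀ c c' : Cell V, IsCell C c → IsCell C c' →
    c' ∈ KV C {τ | τ ∈ C.X ∧ τ.card = n} c

/-- A level function: monotone with respect to strict inclusion of simplices. -/
def IsLevelFun (C : NComplex V n) (lev : Finset V → ℝ) : Prop :=
  ∀ σ ∈ C.X, ∀ σ' ∈ C.X, σ ⊂ σ' → lev σ ≤ lev σ'

/-- `(lev, slt)` is an order with levels on `X`: `lev` is a level function and `slt`
is (the strict form of) a linear order on `X` refining both `lev` and strict
inclusion. -/
def IsOWL (C : NComplex V n) (lev : Finset V → ℝ)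
    (slt : Finset V → Finset V → Prop) : Prop :=
  IsLevelFun C lev ∧
  (∀ σ ∈ C.X, ¬ slt σ σ) ∧
  (∀ σ ∈ C.X, ∀ σ' ∈ C.X, ∀ σ'' ∈ C.X, slt σ σ' → slt σ' σ'' → slt σ σ'') ∧
  (∀ σ ∈ C.X, ∀ σ' ∈ C.X, σ ≠ σ' → slt σ σ' ∨ slt σ' σ) ∧
  (∀ σ ∈ C.X, ∀ σ' ∈ C.X, slt σ σ' → lev σ ≤ lev σ') ∧
  (∀ σ ∈ C.X, ∀ σ' ∈ C.X, σ ⊂ σ' → slt σ σ')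

/-- Extension of a strict order on simplices to `n`-cells, `ω∞ = none` being the
unique maximum. -/
def cslt (slt : Finset V → Finset V → Prop) : Cell V → Cell V → Prop
  | some σ, some σ' => slt σ σ'
  | some _, none => True
  | none, _ => False

/-- `m` is the maximum cell of the set `S` with respect to the order `slt`. -/
def IsMaxCell (slt : Finset V → Finset V → Prop) (S : Set (Cell V)) (m : Cell V) :
    Prop :=
  m ∈ S ∧ ∀ c ∈ S, c ≠ m → cslt slt c m

/-- Edge set of `G(≻ σ₀)`: the `(n-1)`-simplices strictly above `σ₀`. -/
def Egt (C : NComplex V n) (slt : Finset V → Finset V → Prop) (σ₀ : Finset V) :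
    Set (Finset V) :=
  {τ | τ ∈ C.X ∧ τ.card = n ∧ slt σ₀ τ}

/-- Edge set of `G(⪰ σ₀)`. -/
def Ege (C : NComplex V n) (slt : Finset V → Finset V → Prop) (σ₀ : Finset V) :
    Set (Finset V) :=
  {τ | τ ∈ C.X ∧ τ.card = n ∧ (τ = σ₀ ∨ slt σ₀ τ)}

/-- Edge set of `G(lev ≥ s)`. -/
def Elev (C : NComplex V n) (lev : Finset V → ℝ) (s : ℝ) : Set (Finset V) :=
  {τ | τ ∈ C.X ∧ τ.card = n ∧ s ≤ lev τ}

/-- `(τ₀, ω₀)` is a persistence pair of the order `slt`: the two `n`-cells having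
`τ₀` as a face lie in distinct connected components of `G(≻ τ₀)`, and `ω₀` is the
smaller of the two maximum cells of these two components. -/
def IsPersPair (C : NComplex V n) (slt : Finset V → Finset V → Prop)
    (τ₀ ω₀ : Finset V) : Prop :=
  τ₀ ∈ C.X ∧ τ₀.card = n ∧ ω₀ ∈ C.X ∧ ω₀.card = n + 1 ∧
  ∃ c₁ c₂ : Cell V, c₁ ≠ c₂ ∧ faceCell C τ₀ c₁ ∧ faceCell C τ₀ c₂ ∧
    c₂ ∉ KV C (Egt C slt τ₀) c₁ ∧
    ∃ m₂ : Cell V,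
      IsMaxCell slt (KV C (Egt C slt τ₀) c₁) (some ω₀) ∧
      IsMaxCell slt (KV C (Egt C slt τ₀) c₂) m₂ ∧
      cslt slt (some ω₀) m₂

/-- The optimal volume `OV(q, ω₀) = K_V(G(≻_q τ_{q,ω₀}), ω₀)`. -/
def OV (C : NComplex V n) (slt : Finset V → Finset V → Prop) (ω₀ : Finset V) :
    Set (Cell V) :=
  {c | ∃ τ, IsPersPair C slt τ ω₀ ∧ c ∈ KV C (Egt C slt τ) (some ω₀)}

/-- The stable volume `SV_ε(r, τ₀, ω₀) = K_V(G(r̂ ≥ r̂(τ₀) + ε), ω₀)`. -/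
def SV (C : NComplex V n) (lev : Finset V → ℝ) (τ₀ ω₀ : Finset V) (ε : ℝ) :
    Set (Cell V) :=
  KV C (Elev C lev (lev τ₀ + ε)) (some ω₀)

/-- `(qlev, qslt) ∈ R_ε`: an order with levels uniformly `ε/2`-close to `rlev`
satisfying the `(r, ω₀)`-order condition. -/
def InR (C : NComplex V n) (rlev : Finset V → ℝ)
    (rslt : Finset V → Finset V → Prop) (ω₀ : Finset V) (ε : ℝ)
    (qlev : Finset V → ℝ) (qslt : Finset V → Finset V → Prop) : Prop :=
  IsOWL C qlev qslt ∧ (∀ σ ∈ C.X, |qlev σ - rlev σ| < ε / 2) ∧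
  (∀ σ ∈ C.X, rslt σ ω₀ → qslt σ ω₀)

/-- `F_{ε,n}`: the `n`-simplices with level at least `lev τ₀ + ε` that precede `ω₀`. -/
def Fcells (C : NComplex V n) (lev : Finset V → ℝ)
    (slt : Finset V → Finset V → Prop) (τ₀ ω₀ : Finset V) (ε : ℝ) :
    Set (Finset V) :=
  {σ | σ ∈ C.X ∧ σ.card = n + 1 ∧ lev τ₀ + ε ≤ lev σ ∧ slt σ ω₀}

/-- `F_{ε,n-1}`: the `(n-1)`-simplices with level at least `lev τ₀ + ε` that
precede `ω₀`. -/
def Fedges (C : NComplex V n) (lev : Finset V → ℝ)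
    (slt : Finset V → Finset V → Prop) (τ₀ ω₀ : Finset V) (ε : ℝ) :
    Set (Finset V) :=
  {σ | σ ∈ C.X ∧ σ.card = n ∧ lev τ₀ + ε ≤ lev σ ∧ slt σ ω₀}

/-- `τ*(∂z)`: the `ℤ/2ℤ`-sum of the coefficients of `z` over the `n`-simplex
cofaces of `τ`. -/
def bsum (C : NComplex V n) (τ : Finset V) (z : Finset V → ZMod 2) : ZMod 2 :=
  ∑ ω ∈ C.X.filter (fun ω => ω.card = n + 1 ∧ τ ⊆ ω), z ω

/-- A feasible chain `z = ω₀ + Σ_{ω ∈ F_{ε,n}} α_ω ω` with `τ*(∂z) = 0` for all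
`τ ∈ F_{ε,n-1}`. -/
def IsFeasible (C : NComplex V n) (lev : Finset V → ℝ)
    (slt : Finset V → Finset V → Prop) (τ₀ ω₀ : Finset V) (ε : ℝ)
    (z : Finset V → ZMod 2) : Prop :=
  z ω₀ = 1 ∧
  (∀ ω : Finset V, ω ≠ ω₀ → ω ∉ Fcells C lev slt τ₀ ω₀ ε → z ω = 0) ∧
  (∀ τ ∈ Fedges C lev slt τ₀ ω₀ ε, bsum C τ z = 0)

/-- `‖z‖₀`: the number of simplices of `X` with nonzero coefficient in `z`. -/
def norm0 (C : NComplex V n) (z : Finset V → ZMod 2) : ℕ :=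
  (C.X.filter fun ω => z ω ≠ 0).card

/-- The level function of the perturbed order `q(r, η, A)`. -/
noncomputable def pertLev (C : NComplex V n) (rlev : Finset V → ℝ) (η : ℝ)
    (A : Set (Finset V)) : Finset V → ℝ :=
  fun σ => if (σ ∈ C.X ∧ σ.card = n + 1) ∨ σ ∈ A then rlev σ + η else rlev σ - η

/-- The strict order of the perturbed order `q(r, η, A)`. -/
def pertSlt (C : NComplex V n) (rlev : Finset V → ℝ)
    (rslt : Finset V → Finset V → Prop) (η : ℝ) (A : Set (Finset V)) :
    Finset V → Finset V → Prop :=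
  fun σ σ' => pertLev C rlev η A σ < pertLev C rlev η A σ' ∨
    (pertLev C rlev η A σ = pertLev C rlev η A σ' ∧ rslt σ σ')

/-- The `(n-1)`-simplices that are edges of the connected component of `c₀` in the
subgraph with edge set `E`. -/
def compEdges (C : NComplex V n) (E : Set (Finset V)) (c₀ : Cell V) :
    Set (Finset V) :=
  {τ | τ ∈ E ∧ ∃ c, faceCell C τ c ∧ c ∈ KV C E c₀}

/-- `IsPath C E c c' vs es`: `vs` is the vertex list and `es` the edge list of a walk
from `c` to `c'` in the subgraph of the dual graph with edge set `E`. -/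
inductive IsPath (C : NComplex V n) (E : Set (Finset V)) :
    Cell V → Cell V → List (Cell V) → List (Finset V) → Prop
  | nil (c : Cell V) : IsPath C E c c [c] []
  | cons {c c' c'' : Cell V} {vs : List (Cell V)} {es : List (Finset V)}
      {τ : Finset V} : τ ∈ E → faceCell C τ c → faceCell C τ c' → c ≠ c' →
      IsPath C E c' c'' vs es → IsPath C E c c'' (c :: vs) (τ :: es)

/-! `(τ, ω₀)` is a persistence pair exactly when the component of `ω₀` in `G(⪰ τ)` contains
an `n`-cell later than `ω₀` but its component in `G(≻ τ)` does not: the edge `τ` then joins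
the component of `ω₀`, whose maximum is `ω₀`, to the component of the other coface of `τ`,
which has a larger maximum. Since `G(⪰ τ') ⊆ G(≻ τ)` whenever `τ ≺ τ'`, at most one `τ` has
this property. The `≼`-largest `τ` for which the component of `ω₀` in `G(⪰ τ)` reaches above
`ω₀` has it, because `G(≻ τ) = G(⪰ τ')` for the successor `τ'` of `τ`; and some `τ`
qualifies, since for the smallest `(n-1)`-simplex `G(⪰ τ)` is the whole connected dual
graph, which contains `ω∞`. -/

structure IsStrictLinearOn {α : Type*} (s : Set α) (r : α → α → Prop) : Prop where
  irrefl : ∀ a ∈ s, ¬ r a a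
  trans : ∀ a ∈ s, ∀ b ∈ s, ∀ c ∈ s, r a b → r b c → r a c
  total : ∀ a ∈ s, ∀ b ∈ s, a ≠ b → r a b ∨ r b a

namespace IsStrictLinearOn

variable {α : Type*} {s : Set α} {r : α → α → Prop}

theorem asymm (h : IsStrictLinearOn s r) {a b : α} (ha : a ∈ s) (hb : b ∈ s) (hab : r a b) :
    ¬ r b a :=
  fun hba => h.irrefl a ha (h.trans a ha b hb a ha hab hba)

theorem flip (h : IsStrictLinearOn s r) : IsStrictLinearOn s (flip r) where
  irrefl := h.irrefl
  trans a ha b hb c hc hab hbc := h.trans c hc b hb a ha hbc hab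
  total a ha b hb hab := h.total b hb a ha hab.symm

theorem exists_greatest (h : IsStrictLinearOn s r) {t : Finset α} (ht : t.Nonempty)
    (hts : ↑t ⊆ s) : ∃ m ∈ t, ∀ x ∈ t, x ≠ m → r x m := by
  induction ht using Finset.Nonempty.cons_induction with
  | singleton a =>
    exact ⟨a, Finset.mem_singleton_self a, fun x hx hne => absurd (Finset.mem_singleton.1 hx) hne⟩
  | cons a t hat ht ih =>
    rw [Finset.coe_cons, Set.insert_subset_iff] at hts
    obtain ⟨m, hm, hmax⟩ := ih hts.2
    have ham : a ≠ m := fun h => hat (h ▸ hm)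
    rcases h.total a hts.1 m (hts.2 hm) ham with ham | hma
    · refine ⟨m, Finset.mem_cons_of_mem hm, fun x hx hne => ?_⟩
      rcases Finset.mem_cons.1 hx with rfl | hx
      exacts [ham, hmax x hx hne]
    · refine ⟨a, Finset.mem_cons_self a t, fun x hx hne => ?_⟩
      rcases Finset.mem_cons.1 hx with rfl | hx
      · exact absurd rfl hne
      by_cases hxm : x = m
      · exact hxm ▸ hma
      · exact h.trans x (hts.2 hx) m (hts.2 hm) a hts.1 (hmax x hx hxm) hma

end IsStrictLinearOn

variable {C : NComplex V n} {slt : Finset V → Finset V → Prop}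

theorem IsOWL.isStrictLinearOn {lev : Finset V → ℝ} (hr : IsOWL C lev slt) :
    IsStrictLinearOn (↑C.X) slt :=
  ⟨hr.2.1, hr.2.2.1, hr.2.2.2.1⟩

theorem isStrictLinearOn_cslt (h : IsStrictLinearOn (↑C.X) slt) :
    IsStrictLinearOn {c | IsCell C c} (cslt slt) where
  irrefl
    | none, _ => id
    | some σ, hσ => h.irrefl σ hσ.1
  trans
    | none, _, _, _, _, _, hab, _ => hab.elim
    | some _, _, none, _, _, _, _, hbc => hbc.elim
    | some _, _, some _, _, none, _, _, _ => trivial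
    | some a, ha, some b, hb, some c, hc, hab, hbc => h.trans a ha.1 b hb.1 c hc.1 hab hbc
  total
    | none, _, none, _, hne => absurd rfl hne
    | none, _, some _, _, _ => Or.inr trivial
    | some _, _, none, _, _ => Or.inl trivial
    | some a, ha, some b, hb, hne => h.total a ha.1 b hb.1 fun hab => hne (hab ▸ rfl)

section Components

variable {E E' : Set (Finset V)} {c c' c'' : Cell V}

theorem IsCell.of_faceCell {τ : Finset V} (h : faceCell C τ c) : IsCell C c := by
  cases c with
  | none => trivial
  | some ω => exact ⟨h.1, h.2.1⟩

theorem adj_symm (h : adj C E c c') : adj C E c' c :=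
  let ⟨τ, hτ, h₁, h₂, hne⟩ := h
  ⟨τ, hτ, h₂, h₁, hne.symm⟩

theorem mem_KV_trans (h : c' ∈ KV C E c) (h' : c'' ∈ KV C E c') : c'' ∈ KV C E c :=
  Relation.ReflTransGen.trans h h'

instance : Std.Symm (adj C E) := ⟨fun _ _ => adj_symm⟩

theorem mem_KV_comm : c' ∈ KV C E c ↔ c ∈ KV C E c' :=
  ⟨Std.Symm.symm _ _, Std.Symm.symm _ _⟩

theorem KV_eq_of_mem (h : c' ∈ KV C E c) : KV C E c' = KV C E c :=
  Set.ext fun _ => ⟨mem_KV_trans h, mem_KV_trans (mem_KV_comm.1 h)⟩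

theorem KV_mono (hE : E ⊆ E') : KV C E c ⊆ KV C E' c := fun _ hx =>
  Relation.ReflTransGen.mono (fun _ _ ⟨τ, hτ, h⟩ => ⟨τ, hE hτ, h⟩) _ _ hx

theorem IsCell.of_mem_KV (hc : IsCell C c) (h : c' ∈ KV C E c) : IsCell C c' := by
  induction h with
  | refl => exact hc
  | tail _ hadj _ =>
    obtain ⟨τ, -, -, hface, -⟩ := hadj
    exact IsCell.of_faceCell hface

theorem finite_KV (hc : IsCell C c) : (KV C E c).Finite := by
  refine ((C.X.finite_toSet.image some).insert none).subset fun x hx => ?_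
  cases x with
  | none => exact Set.mem_insert _ _
  | some ω => exact Set.mem_insert_of_mem _ ⟨ω, (hc.of_mem_KV hx).1, rfl⟩

theorem nonempty_of_mem_KV_of_ne (h : c' ∈ KV C E c) (hne : c' ≠ c) : E.Nonempty := by
  induction h with
  | refl => exact absurd rfl hne
  | tail _ hadj _ =>
    obtain ⟨τ, hτ, -⟩ := hadj
    exact ⟨τ, hτ⟩

theorem KV_insert_subset {τ : Finset V} {c₁ c₂ : Cell V}
    (hface : ∀ c, faceCell C τ c → c = c₁ ∨ c = c₂) :
    KV C (insert τ E) c ⊆ KV C E c ∪ KV C E c₁ ∪ KV C E c₂ := by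
  intro x hx
  induction hx with
  | refl => exact Or.inl (Or.inl .refl)
  | tail _ hadj ih =>
    obtain ⟨τ', hτ', h₁, h₂, hne⟩ := hadj
    rcases hτ' with rfl | hτ'E
    · rcases hface _ h₂ with rfl | rfl
      exacts [Or.inl (Or.inr .refl), Or.inr .refl]
    · have hadj : adj C E _ _ := ⟨τ', hτ'E, h₁, h₂, hne⟩
      rcases ih with (h | h) | h
      exacts [Or.inl (Or.inl (h.tail hadj)), Or.inl (Or.inr (h.tail hadj)), Or.inr (h.tail hadj)]

theorem KV_insert_subset_of_notMem {τ : Finset V} {c₁ c₂ : Cell V}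
    (hface : ∀ c, faceCell C τ c → c = c₁ ∨ c = c₂) (h₁ : c₁ ∉ KV C E c)
    (h₂ : c₂ ∉ KV C E c) : KV C (insert τ E) c ⊆ KV C E c := by
  intro x hx
  induction hx with
  | refl => exact .refl
  | tail _ hadj ih =>
    obtain ⟨τ', hτ', hb, hx, hne⟩ := hadj
    rcases hτ' with rfl | hτ'E
    · rcases hface _ hb with rfl | rfl
      exacts [absurd ih h₁, absurd ih h₂]
    · exact ih.tail ⟨τ', hτ'E, hb, hx, hne⟩

theorem exists_faceCell_of_mem_KV_insert {τ : Finset V} {c₁ c₂ x : Cell V}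
    (hface : ∀ c, faceCell C τ c ↔ c = c₁ ∨ c = c₂) (hx : x ∈ KV C (insert τ E) c)
    (hxc : x ∉ KV C E c) :
    ∃ d₁ d₂, faceCell C τ d₁ ∧ faceCell C τ d₂ ∧ d₁ ∈ KV C E c ∧ x ∈ KV C E d₂ := by
  have hf₁ := (hface c₁).2 (Or.inl rfl)
  have hf₂ := (hface c₂).2 (Or.inr rfl)
  have hx' := KV_insert_subset (fun c => (hface c).1) hx
  by_cases h₁ : c₁ ∈ KV C E c
  · rcases hx' with (h | h) | h
    exacts [absurd h hxc, absurd (mem_KV_trans h₁ h) hxc, ⟨c₁, c₂, hf₁, hf₂, h₁, h⟩]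
  by_cases h₂ : c₂ ∈ KV C E c
  · rcases hx' with (h | h) | h
    exacts [absurd h hxc, ⟨c₂, c₁, hf₂, hf₁, h₂, h⟩, absurd (mem_KV_trans h₂ h) hxc]
  exact absurd (KV_insert_subset_of_notMem (fun c => (hface c).1) h₁ h₂ hx) hxc

theorem exists_isMaxCell_KV (h : IsStrictLinearOn (↑C.X) slt) (hc : IsCell C c) :
    ∃ m, IsMaxCell slt (KV C E c) m := by
  have hfin := finite_KV (E := E) hc
  obtain ⟨m, hm, hmax⟩ := (isStrictLinearOn_cslt h).exists_greatest
    ⟨c, hfin.mem_toFinset.2 .refl⟩ fun x hx => hc.of_mem_KV (hfin.mem_toFinset.1 hx)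
  exact ⟨m, hfin.mem_toFinset.1 hm, fun x hx => hmax x (hfin.mem_toFinset.2 hx)⟩

end Components

section EdgeSets

variable {σ σ' : Finset V}

theorem Egt_subset_Ege : Egt C slt σ ⊆ Ege C slt σ :=
  fun _ h => ⟨h.1, h.2.1, Or.inr h.2.2⟩

theorem Ege_eq_insert_Egt (hσ : σ ∈ C.X) (hσn : σ.card = n) :
    Ege C slt σ = insert σ (Egt C slt σ) := by
  ext τ
  simp only [Ege, Egt, Set.mem_insert_iff, Set.mem_ofPred_eq]
  constructor
  · rintro ⟨hτ, hτn, rfl | hlt⟩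
    exacts [Or.inl rfl, Or.inr ⟨hτ, hτn, hlt⟩]
  · rintro (rfl | ⟨hτ, hτn, hlt⟩)
    exacts [⟨hσ, hσn, Or.inl rfl⟩, ⟨hτ, hτn, Or.inr hlt⟩]

theorem Ege_subset_Egt (h : IsStrictLinearOn (↑C.X) slt) (hσ : σ ∈ C.X) (hσ' : σ' ∈ C.X)
    (hlt : slt σ σ') : Ege C slt σ' ⊆ Egt C slt σ := by
  rintro τ ⟨hτ, hτn, rfl | hlt'⟩
  exacts [⟨hτ, hτn, hlt⟩, ⟨hτ, hτn, h.trans σ hσ σ' hσ' τ hτ hlt hlt'⟩]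

end EdgeSets

def ReachesAbove (C : NComplex V n) (slt : Finset V → Finset V → Prop) (E : Set (Finset V))
    (ω₀ : Finset V) : Prop :=
  ∃ c ∈ KV C E (some ω₀), cslt slt (some ω₀) c

section PersistencePairs

variable {E E' : Set (Finset V)} {τ τ' ω₀ : Finset V}

theorem ReachesAbove.mono (hE : E ⊆ E') (h : ReachesAbove C slt E ω₀) :
    ReachesAbove C slt E' ω₀ :=
  let ⟨c, hc, hlt⟩ := h
  ⟨c, KV_mono hE hc, hlt⟩

theorem not_reachesAbove_iff_isMaxCell (h : IsStrictLinearOn (↑C.X) slt)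
    (hω₀ : IsCell C (some ω₀)) :
    ¬ ReachesAbove C slt E ω₀ ↔ IsMaxCell slt (KV C E (some ω₀)) (some ω₀) := by
  have hcell := isStrictLinearOn_cslt h
  constructor
  · refine fun hnot => ⟨.refl, fun c hc hne => ?_⟩
    rcases hcell.total c (hω₀.of_mem_KV hc) _ hω₀ hne with hlt | hlt
    exacts [hlt, absurd ⟨c, hc, hlt⟩ hnot]
  · rintro ⟨-, hmax⟩ ⟨c, hc, hlt⟩
    have hne : c ≠ some ω₀ := by rintro rfl; exact hcell.irrefl _ hω₀ hlt
    exact hcell.asymm hω₀ (hω₀.of_mem_KV hc) hlt (hmax c hc hne)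

theorem IsPersPair.reachesAbove_Ege (hp : IsPersPair C slt τ ω₀) :
    ReachesAbove C slt (Ege C slt τ) ω₀ := by
  obtain ⟨hτ, hτn, -, -, c₁, c₂, hne, h₁, h₂, -, m₂, hmax₁, hmax₂, hlt⟩ := hp
  have hω₀c₁ : c₁ ∈ KV C (Ege C slt τ) (some ω₀) :=
    mem_KV_comm.1 (KV_mono Egt_subset_Ege hmax₁.1)
  have hc₁c₂ : c₂ ∈ KV C (Ege C slt τ) c₁ := .single ⟨τ, ⟨hτ, hτn, Or.inl rfl⟩, h₁, h₂, hne⟩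
  exact ⟨m₂, mem_KV_trans (mem_KV_trans hω₀c₁ hc₁c₂) (KV_mono Egt_subset_Ege hmax₂.1), hlt⟩

theorem IsPersPair.not_reachesAbove_Egt (h : IsStrictLinearOn (↑C.X) slt)
    (hp : IsPersPair C slt τ ω₀) : ¬ ReachesAbove C slt (Egt C slt τ) ω₀ := by
  obtain ⟨-, -, hω₀, hω₀n, c₁, -, -, -, -, -, -, hmax₁, -⟩ := hp
  rw [not_reachesAbove_iff_isMaxCell h ⟨hω₀, hω₀n⟩, KV_eq_of_mem hmax₁.1]
  exact hmax₁

theorem isPersPair_of_reachesAbove (h : IsStrictLinearOn (↑C.X) slt) (htwo : TwoCofaces C)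
    (hτ : τ ∈ C.X) (hτn : τ.card = n) (hω₀ : ω₀ ∈ C.X) (hω₀n : ω₀.card = n + 1)
    (hge : ReachesAbove C slt (Ege C slt τ) ω₀) (hgt : ¬ ReachesAbove C slt (Egt C slt τ) ω₀) :
    IsPersPair C slt τ ω₀ := by
  obtain ⟨c₁, c₂, -, hface⟩ := htwo τ hτ hτn
  obtain ⟨cs, hcs, hlt⟩ := hge
  have hcs_gt : cs ∉ KV C (Egt C slt τ) (some ω₀) := fun hcs' => hgt ⟨cs, hcs', hlt⟩
  rw [Ege_eq_insert_Egt hτ hτn] at hcs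
  obtain ⟨d₁, d₂, hd₁, hd₂, hω₀d₁, hd₂cs⟩ := exists_faceCell_of_mem_KV_insert hface hcs hcs_gt
  have hKV := KV_eq_of_mem hω₀d₁
  have hsep : d₂ ∉ KV C (Egt C slt τ) d₁ := fun h => hcs_gt (hKV ▸ mem_KV_trans h hd₂cs)
  have hd₂cell : IsCell C d₂ := .of_faceCell hd₂
  obtain ⟨m₂, hm₂⟩ := exists_isMaxCell_KV (E := Egt C slt τ) h hd₂cell
  refine ⟨hτ, hτn, hω₀, hω₀n, d₁, d₂, ?_, hd₁, hd₂, hsep, m₂, ?_, hm₂, ?_⟩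
  · rintro rfl
    exact hsep .refl
  · rw [hKV]
    exact (not_reachesAbove_iff_isMaxCell h ⟨hω₀, hω₀n⟩).1 hgt
  · by_cases hcs_m₂ : cs = m₂
    · exact hcs_m₂ ▸ hlt
    · exact (isStrictLinearOn_cslt h).trans (some ω₀) ⟨hω₀, hω₀n⟩ cs (hd₂cell.of_mem_KV hd₂cs) m₂
        (hd₂cell.of_mem_KV hm₂.1) hlt (hm₂.2 cs hd₂cs hcs_m₂)

theorem reachesAbove_Ege_of_reachesAbove_Egt (h : IsStrictLinearOn (↑C.X) slt)
    (hω₀ : ω₀ ∈ C.X) (hgt : ReachesAbove C slt (Egt C slt τ) ω₀) :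
    ∃ τ' ∈ C.X, τ'.card = n ∧ slt τ τ' ∧ ReachesAbove C slt (Ege C slt τ') ω₀ := by
  obtain ⟨c, hc, hlt⟩ := hgt
  have hne : c ≠ some ω₀ := by
    rintro rfl
    exact h.irrefl ω₀ hω₀ hlt
  obtain ⟨τ₁, hτ₁, hτ₁n, hτ₁lt⟩ := nonempty_of_mem_KV_of_ne hc hne
  obtain ⟨τ', hτ'A, hmin⟩ := h.flip.exists_greatest
    (t := C.X.filter fun τ' => τ'.card = n ∧ slt τ τ')
    ⟨τ₁, Finset.mem_filter.2 ⟨hτ₁, hτ₁n, hτ₁lt⟩⟩ (Finset.coe_subset.2 (Finset.filter_subset _ _))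
  obtain ⟨hτ', hτ'n, hlt'⟩ := Finset.mem_filter.1 hτ'A
  have hsub : Egt C slt τ ⊆ Ege C slt τ' := fun σ ⟨hσ, hσn, hσlt⟩ =>
    ⟨hσ, hσn, (eq_or_ne σ τ').imp_right (hmin σ (Finset.mem_filter.2 ⟨hσ, hσn, hσlt⟩))⟩
  exact ⟨τ', hτ', hτ'n, hlt', c, KV_mono hsub hc, hlt⟩

theorem exists_reachesAbove_Ege (h : IsStrictLinearOn (↑C.X) slt) (hconn : DualConn C)
    (hn : 0 < n) (hω₀ : ω₀ ∈ C.X) (hω₀n : ω₀.card = n + 1) :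
    ∃ τ ∈ C.X, τ.card = n ∧ ReachesAbove C slt (Ege C slt τ) ω₀ := by
  obtain ⟨σ, hσω₀, hσn⟩ := Finset.exists_subset_card_eq (show n ≤ ω₀.card by omega)
  have hσ : σ ∈ C.X := C.down_closed ω₀ hω₀ σ hσω₀ (Finset.card_pos.1 (by omega))
  obtain ⟨τ, hτT, hmin⟩ := h.flip.exists_greatest (t := C.X.filter (·.card = n))
    ⟨σ, Finset.mem_filter.2 ⟨hσ, hσn⟩⟩ (Finset.coe_subset.2 (Finset.filter_subset _ _))
  obtain ⟨hτ, hτn⟩ := Finset.mem_filter.1 hτT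
  have hall : {τ' | τ' ∈ C.X ∧ τ'.card = n} ⊆ Ege C slt τ := fun τ' ⟨hτ', hτ'n⟩ =>
    ⟨hτ', hτ'n, (eq_or_ne τ' τ).imp_right (hmin τ' (Finset.mem_filter.2 ⟨hτ', hτ'n⟩))⟩
  exact ⟨τ, hτ, hτn, none, KV_mono hall (hconn _ _ ⟨hω₀, hω₀n⟩ trivial), trivial⟩

theorem exists_isPersPair (h : IsStrictLinearOn (↑C.X) slt) (htwo : TwoCofaces C)
    (hconn : DualConn C) (hn : 0 < n) (hω₀ : ω₀ ∈ C.X) (hω₀n : ω₀.card = n + 1) :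
    ∃ τ, IsPersPair C slt τ ω₀ := by
  obtain ⟨τ₁, hτ₁, hτ₁n, hτ₁ge⟩ := exists_reachesAbove_Ege h hconn hn hω₀ hω₀n
  obtain ⟨τ, hτS, hmax⟩ := h.exists_greatest
    (t := C.X.filter fun τ => τ.card = n ∧ ReachesAbove C slt (Ege C slt τ) ω₀)
    ⟨τ₁, Finset.mem_filter.2 ⟨hτ₁, hτ₁n, hτ₁ge⟩⟩ (Finset.coe_subset.2 (Finset.filter_subset _ _))
  obtain ⟨hτ, hτn, hge⟩ := Finset.mem_filter.1 hτS
  refine ⟨τ, isPersPair_of_reachesAbove h htwo hτ hτn hω₀ hω₀n hge fun hgt => ?_⟩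
  obtain ⟨τ', hτ', hτ'n, hlt, hge'⟩ := reachesAbove_Ege_of_reachesAbove_Egt h hω₀ hgt
  have hne : τ' ≠ τ := by
    rintro rfl
    exact h.irrefl _ hτ hlt
  exact h.asymm hτ hτ' hlt (hmax τ' (Finset.mem_filter.2 ⟨hτ', hτ'n, hge'⟩) hne)

theorem IsPersPair.not_slt (h : IsStrictLinearOn (↑C.X) slt) (hp : IsPersPair C slt τ ω₀)
    (hp' : IsPersPair C slt τ' ω₀) : ¬ slt τ τ' := fun hlt =>
  hp.not_reachesAbove_Egt h (hp'.reachesAbove_Ege.mono (Ege_subset_Egt h hp.1 hp'.1 hlt))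

theorem IsPersPair.eq (h : IsStrictLinearOn (↑C.X) slt) (hp : IsPersPair C slt τ ω₀)
    (hp' : IsPersPair C slt τ' ω₀) : τ = τ' := by
  by_contra hne
  rcases h.total τ hp.1 τ' hp'.1 hne with hlt | hlt
  exacts [hp.not_slt h hp' hlt, hp'.not_slt h hp hlt]

end PersistencePairs

/-- every `n`-simplex is the death simplex of exactly one
persistence pair. -/
theorem existsUnique_birth_simplex
    (hn : 2 ≤ n) (C : NComplex V n) (htwo : TwoCofaces C) (hconn : DualConn C)
    (rlev : Finset V → ℝ) (rslt : Finset V → Finset V → Prop)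
    (hr : IsOWL C rlev rslt) :
    ∀ ω₀ ∈ C.X, ω₀.card = n + 1 →
      ∃! τ₀ : Finset V, IsPersPair C rslt τ₀ ω₀ := by
  intro ω₀ hω₀ hω₀n
  obtain ⟨τ₀, hτ₀⟩ := exists_isPersPair hr.isStrictLinearOn htwo hconn (by omega) hω₀ hω₀n
  exact ⟨τ₀, hτ₀, fun τ hτ => hτ.eq hr.isStrictLinearOn hτ₀⟩

end StableVol
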